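/- arXiv:1908.01229 — 2 statements merged into one kernel-verified Lean document; each statement's English description precedes it below -/
import Mathlib

section
/- Fix a group G of permutations of a set V. Let matter configurations be ψ : ℤ → V × V and gauge fields A : ℤ → G (A_x interpreted as the field at half-integer position x+1/2). Define R_A by (R_A ψ)_x = (A_x⁻¹ ψ^l_{x+1}, A_{x-1} ψ^r_{x-1}), and for a family γ : ℤ → G define γ̄(ψ)_x = (γ_x ψ^l_x, γ_x ψ^r_x) and γ̄(A)_x = γ_{x+1} ∘ A_x ∘ γ_x⁻¹. Then R_{γ̄(A)} ∘ γ̄ = γ̄ ∘ R_A for all γ and A (inhomogeneous gauge-invariance with Z = identity). -/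
/-- inhomogeneous gauge-invariance of the gauged theory `R_A`,
with `Z = identity`: `R_{γ̄(A)} ∘ γ̄ = γ̄ ∘ R_A`. -/
theorem gauged_theory_inhomogeneous_gauge_invariance
    {V : Type*} (G : Subgroup (Equiv.Perm V))
    (RA : (ℤ → G) → (ℤ → V × V) → (ℤ → V × V))
    (hRA : ∀ (A : ℤ → G) (ψ : ℤ → V × V) (x : ℤ),
      RA A ψ x = (((A x)⁻¹ : G).1 (ψ (x + 1)).1, ((A (x - 1) : G) : Equiv.Perm V) (ψ (x - 1)).2))
    (gaugePsi : (ℤ → G) → (ℤ → V × V) → (ℤ → V × V))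
    (hgaugePsi : ∀ (γ : ℤ → G) (ψ : ℤ → V × V) (x : ℤ),
      gaugePsi γ ψ x = (((γ x : G) : Equiv.Perm V) (ψ x).1, ((γ x : G) : Equiv.Perm V) (ψ x).2))
    (gaugeA : (ℤ → G) → (ℤ → G) → (ℤ → G))
    (hgaugeA : ∀ (γ A : ℤ → G) (x : ℤ), gaugeA γ A x = γ (x + 1) * A x * (γ x)⁻¹) :
    ∀ (γ A : ℤ → G) (ψ : ℤ → V × V),
      RA (gaugeA γ A) (gaugePsi γ ψ) = gaugePsi γ (RA A ψ) := by
  intro γ A ψ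
  funext x
  simp only [hRA, hgaugePsi, hgaugeA, sub_add_cancel]
  simp [mul_assoc, Equiv.Perm.mul_apply]
end

section
/- Define the full theory T on pairs (ψ, A) with ψ : ℤ → V × V and A : ℤ → G by T(ψ, A) = (R_A ψ, A), where (R_A ψ)_x = (A_x⁻¹ ψ^l_{x+1}, A_{x-1} ψ^r_{x-1}). With gauge transformations acting by γ̄(ψ, A) = (x ↦ (γ_x ψ^l_x, γ_x ψ^r_x), x ↦ γ_{x+1} A_x γ_x⁻¹), T is gauge-invariant with Z = identity: T ∘ γ̄ = γ̄ ∘ T for every γ : ℤ → G. -/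
/-- the full theory `T(ψ, A) = (R_A ψ, A)` is gauge-invariant
with `Z = identity`: `T ∘ γ̄ = γ̄ ∘ T`. -/
theorem full_theory_gauge_invariant
    {V : Type*} (G : Subgroup (Equiv.Perm V))
    (T : (ℤ → V × V) × (ℤ → G) → (ℤ → V × V) × (ℤ → G))
    (hT : ∀ (ψ : ℤ → V × V) (A : ℤ → G),
      T (ψ, A) = ((fun x => (((A x)⁻¹ : G).1 (ψ (x + 1)).1,
                             ((A (x - 1) : G) : Equiv.Perm V) (ψ (x - 1)).2)), A))
    (gauge : (ℤ → G) → (ℤ → V × V) × (ℤ → G) → (ℤ → V × V) × (ℤ → G))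
    (hgauge : ∀ (γ : ℤ → G) (ψ : ℤ → V × V) (A : ℤ → G),
      gauge γ (ψ, A) = ((fun x => (((γ x : G) : Equiv.Perm V) (ψ x).1,
                                   ((γ x : G) : Equiv.Perm V) (ψ x).2)),
                        (fun x => γ (x + 1) * A x * (γ x)⁻¹))) :
    ∀ γ : ℤ → G, T ∘ gauge γ = gauge γ ∘ T := by
  intro γ
  funext p
  obtain ⟨ψ, A⟩ := p
  simp only [Function.comp_apply, hT, hgauge]
  refine Prod.ext ?_ rfl
  funext x
  refine Prod.ext ?_ ?_
  · show (((γ (x + 1) * A x * (γ x)⁻¹)⁻¹ : G) : Equiv.Perm V)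
        (((γ (x + 1) : G) : Equiv.Perm V) (ψ (x + 1)).1)
      = ((γ x : G) : Equiv.Perm V) (((A x)⁻¹ : G).1 (ψ (x + 1)).1)
    simp [mul_assoc, Equiv.Perm.mul_apply]
  · show (((γ (x - 1 + 1) * A (x - 1) * (γ (x - 1))⁻¹ : G)) : Equiv.Perm V)
        (((γ (x - 1) : G) : Equiv.Perm V) (ψ (x - 1)).2)
      = ((γ x : G) : Equiv.Perm V) (((A (x - 1) : G) : Equiv.Perm V) (ψ (x - 1)).2)
    simp [sub_add_cancel, mul_assoc, Equiv.Perm.mul_apply]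
end
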